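/- For every (z,σ) ∈ ℝ^N ∖ {(0,0)} with z ≠ 0, the Finsler Laplacian in the z-variables of ρ satisfies Δ_Φ(ρ)(z,σ) = (m+2α) Φ⁰(z)^{2α} ρ(z,σ)^{-2α-1} − (2α+1) Φ⁰(z)^{4α+2} ρ(z,σ)^{-4α-3}. -/

import Mathlib

/-! For `z ≠ 0` the dual norm `Φ⁰` is differentiable at `z` with gradient the unique maximizer `ξ`
of `⟪z, ·⟫` on `{Φ = 1}` (Danskin's theorem), and `∇Φ(ξ) = z / Φ⁰(z)` because
`Φ⁰(z) Φ - ⟪z, ·⟫ ≥ 0` vanishes at `ξ`. Since `∇Φ` is `0`-homogeneous, a radial function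
`u = g ∘ Φ⁰` with `g' > 0` has Finsler flux `Φ(∇u) ∇Φ(∇u) = (g'(Φ⁰) / Φ⁰) z`, whose divergence is
`g''(Φ⁰) + (m - 1) g'(Φ⁰) / Φ⁰` by `⟪∇Φ⁰(z), z⟫ = Φ⁰(z)`. The gauge `ρ` is such a function, with
`g(t) = (t^{2(α+1)} + C)^{1/(2(α+1))}`, and the formula follows from `g'` and `g''`. -/

open Real MeasureTheory
open scoped RealInnerProductSpace

noncomputable section

abbrev Euc (n : ℕ) := EuclideanSpace ℝ (Fin n)

/-- A Minkowski norm on `ℝⁿ`: nonnegative, absolutely homogeneous, with `N²` of class `C²`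
away from the origin and strictly convex. -/
def IsMinkowskiNorm {n : ℕ} (N : Euc n → ℝ) : Prop :=
  (∀ x, 0 ≤ N x) ∧ (∀ (l : ℝ) (x : Euc n), N (l • x) = |l| * N x) ∧
  ContDiffOn ℝ 2 (fun x => (N x) ^ 2) {(0 : Euc n)}ᶜ ∧
  StrictConvexOn ℝ Set.univ (fun x => (N x) ^ 2)

/-- The Legendre transform (dual norm) `N⁰(x) = sup { ⟨x,ξ⟩ : N(ξ) = 1 }`. -/
def dualNorm {n : ℕ} (N : Euc n → ℝ) (x : Euc n) : ℝ :=
  sSup ((fun ξ => ⟪x, ξ⟫) '' {ξ | N ξ = 1})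

variable {m k : ℕ}

/-- The dual anisotropic Minkowski gauge
`ρ(z,σ) = (Φ⁰(z)^{2(α+1)} + 4(α+1)²Ψ⁰(σ)²)^{1/(2(α+1))}`. -/
def rho (α : ℝ) (Φ : Euc m → ℝ) (Ψ : Euc k → ℝ) (x : Euc m × Euc k) : ℝ :=
  (dualNorm Φ x.1 ^ (2 * (α + 1)) + 4 * (α + 1) ^ 2 * dualNorm Ψ x.2 ^ 2) ^ (1 / (2 * (α + 1)))

/-- Gradient in the `z` variables. -/
def gradZ (u : Euc m × Euc k → ℝ) (x : Euc m × Euc k) : Euc m :=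
  gradient (fun z => u (z, x.2)) x.1

/-- Gradient in the `σ` variables. -/
def gradS (u : Euc m × Euc k → ℝ) (x : Euc m × Euc k) : Euc k :=
  gradient (fun σ => u (x.1, σ)) x.2

/-- Divergence in the `z` variables. -/
def divZ (V : Euc m × Euc k → Euc m) (x : Euc m × Euc k) : ℝ :=
  ∑ i, fderiv ℝ (fun z => V (z, x.2) i) x.1 (EuclideanSpace.single i 1)

/-- Divergence in the `σ` variables. -/
def divS (V : Euc m × Euc k → Euc k) (x : Euc m × Euc k) : ℝ :=
  ∑ i, fderiv ℝ (fun σ => V (x.1, σ) i) x.2 (EuclideanSpace.single i 1)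

/-- The Finsler Laplacian in the `z` variables, `Δ_Φ(u) = div_z(Φ(∇_z u) ∇Φ(∇_z u))`. -/
def finslerLapZ (Φ : Euc m → ℝ) (u : Euc m × Euc k → ℝ) (x : Euc m × Euc k) : ℝ :=
  divZ (fun y => Φ (gradZ u y) • gradient Φ (gradZ u y)) x

/-- The Finsler Laplacian in the `σ` variables, `Δ_Ψ(u) = div_σ(Ψ(∇_σ u) ∇Ψ(∇_σ u))`. -/
def finslerLapS (Ψ : Euc k → ℝ) (u : Euc m × Euc k → ℝ) (x : Euc m × Euc k) : ℝ :=
  divS (fun y => Ψ (gradS u y) • gradient Ψ (gradS u y)) x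

/-- The operator `𝓛_{α,p}`. -/
def Lop (α p : ℝ) (Φ : Euc m → ℝ) (Ψ : Euc k → ℝ) (u : Euc m × Euc k → ℝ)
    (x : Euc m × Euc k) : ℝ :=
  divZ (fun y =>
      (Φ (gradZ u y) ^ 2 + dualNorm Φ y.1 ^ (2 * α) / 4 * Ψ (gradS u y) ^ 2) ^ ((p - 2) / 2) •
        (Φ (gradZ u y) • gradient Φ (gradZ u y))) x
  + divS (fun y =>
      (Φ (gradZ u y) ^ 2 + dualNorm Φ y.1 ^ (2 * α) / 4 * Ψ (gradS u y) ^ 2) ^ ((p - 2) / 2) •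
        ((dualNorm Φ y.1 ^ (2 * α) / 4 * Ψ (gradS u y)) • gradient Ψ (gradS u y))) x

/-- The operator `𝓛_{α,2}(u) = Δ_Φ(u) + (Φ⁰(z)^{2α}/4) Δ_Ψ(u)`. -/
def Lop2 (α : ℝ) (Φ : Euc m → ℝ) (Ψ : Euc k → ℝ) (u : Euc m × Euc k → ℝ)
    (x : Euc m × Euc k) : ℝ :=
  finslerLapZ Φ u x + dualNorm Φ x.1 ^ (2 * α) / 4 * finslerLapS Ψ u x

namespace IsMinkowskiNorm

variable {n : ℕ} {N : Euc n → ℝ}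

lemma nonneg (h : IsMinkowskiNorm N) (x : Euc n) : 0 ≤ N x := h.1 x

lemma apply_smul (h : IsMinkowskiNorm N) (l : ℝ) (x : Euc n) : N (l • x) = |l| * N x := h.2.1 l x

lemma map_zero (h : IsMinkowskiNorm N) : N 0 = 0 := by
  simpa using h.apply_smul 0 0

lemma pos (h : IsMinkowskiNorm N) {x : Euc n} (hx : x ≠ 0) : 0 < N x := by
  refine (h.nonneg x).lt_of_ne' fun hx0 => ?_
  have := h.2.2.2.2 (Set.mem_univ x) (Set.mem_univ 0) hx (by norm_num : (0 : ℝ) < 1 / 2)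
    (by norm_num : (0 : ℝ) < 1 / 2) (by norm_num)
  simp [h.apply_smul, hx0, h.map_zero] at this

lemma apply_inv_smul_self (h : IsMinkowskiNorm N) {x : Euc n} (hx : x ≠ 0) :
    N ((N x)⁻¹ • x) = 1 := by
  rw [h.apply_smul, abs_of_pos (inv_pos.2 (h.pos hx)), inv_mul_cancel₀ (h.pos hx).ne']

lemma continuous (h : IsMinkowskiNorm N) : Continuous N := by
  have hsq : Continuous fun x => N x ^ 2 :=
    continuousOn_univ.1 (h.2.2.2.convexOn.continuousOn isOpen_univ)
  exact hsq.sqrt.congr fun x => Real.sqrt_sq (h.nonneg x)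

lemma differentiableAt (h : IsMinkowskiNorm N) {x : Euc n} (hx : x ≠ 0) :
    DifferentiableAt ℝ N x := by
  have hsq : DifferentiableAt ℝ (fun y => N y ^ 2) x :=
    (h.2.2.1.contDiffAt (isOpen_compl_singleton.mem_nhds hx)).differentiableAt two_ne_zero
  simpa only [Real.sqrt_sq (h.nonneg _)] using hsq.sqrt (pow_pos (h.pos hx) 2).ne'

lemma fderiv_smul_of_pos (h : IsMinkowskiNorm N) {x : Euc n} (hx : x ≠ 0) {c : ℝ}
    (hc : 0 < c) : fderiv ℝ N (c • x) = fderiv ℝ N x := by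
  have hchain : HasFDerivAt (fun y => N (c • y)) (c • fderiv ℝ N (c • x)) x := by
    have := (h.differentiableAt (smul_ne_zero hc.ne' hx)).hasFDerivAt.comp x
      ((hasFDerivAt_id x).const_smul c)
    simpa [Function.comp_def, ContinuousLinearMap.comp_smul] using this
  have hhom : HasFDerivAt (fun y => N (c • y)) (c • fderiv ℝ N x) x := by
    simp_rw [h.apply_smul, abs_of_pos hc]
    exact (h.differentiableAt hx).hasFDerivAt.const_mul c
  exact smul_right_injective _ hc.ne' (hchain.unique hhom)

lemma gradient_smul_of_pos (h : IsMinkowskiNorm N) {x : Euc n} (hx : x ≠ 0) {c : ℝ}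
    (hc : 0 < c) : gradient N (c • x) = gradient N x := by
  rw [gradient, gradient, h.fderiv_smul_of_pos hx hc]

lemma isBounded_unitSphere (h : IsMinkowskiNorm N) : Bornology.IsBounded {ξ | N ξ = 1} := by
  obtain ⟨R, hR⟩ := (isCompact_sphere (0 : Euc n) 1).bddAbove_image (f := fun u => (N u)⁻¹)
    (h.continuous.continuousOn.inv₀ fun u hu => (h.pos (ne_zero_of_mem_sphere one_ne_zero
      ⟨u, hu⟩)).ne')
  refine isBounded_iff_forall_norm_le.2 ⟨R, fun ξ hξ => ?_⟩
  have hξ0 : ξ ≠ 0 := by rintro rfl; simp [h.map_zero] at hξ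
  have hmem : ‖ξ‖⁻¹ • ξ ∈ Metric.sphere (0 : Euc n) 1 := by
    simp [norm_smul, hξ0]
  have hξ1 : N ξ = 1 := hξ
  simpa [h.apply_smul, hξ1] using hR ⟨_, hmem, rfl⟩

lemma isCompact_unitSphere (h : IsMinkowskiNorm N) : IsCompact {ξ | N ξ = 1} :=
  Metric.isCompact_of_isClosed_isBounded (isClosed_eq h.continuous continuous_const)
    h.isBounded_unitSphere

lemma inner_le_dualNorm (h : IsMinkowskiNorm N) (z : Euc n) {η : Euc n} (hη : N η = 1) :
    ⟪z, η⟫ ≤ dualNorm N z :=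
  le_csSup (h.isCompact_unitSphere.image (continuous_const.inner continuous_id)).bddAbove
    ⟨η, hη, rfl⟩

lemma inner_le_dualNorm_mul (h : IsMinkowskiNorm N) (z η : Euc n) :
    ⟪z, η⟫ ≤ dualNorm N z * N η := by
  rcases eq_or_ne η 0 with rfl | hη
  · simp [h.map_zero]
  have := h.inner_le_dualNorm z (h.apply_inv_smul_self hη)
  rwa [real_inner_smul_right, inv_mul_le_iff₀ (h.pos hη), mul_comm] at this

lemma exists_inner_eq_dualNorm [Nontrivial (Euc n)] (h : IsMinkowskiNorm N) (z : Euc n) :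
    ∃ ξ, N ξ = 1 ∧ ⟪z, ξ⟫ = dualNorm N z := by
  obtain ⟨v, hv⟩ := exists_ne (0 : Euc n)
  have hne : {ξ | N ξ = 1}.Nonempty := ⟨_, h.apply_inv_smul_self hv⟩
  have hcont : Continuous fun η : Euc n => ⟪z, η⟫ := by fun_prop
  obtain ⟨ξ, hξ, hmax⟩ := h.isCompact_unitSphere.exists_isMaxOn hne hcont.continuousOn
  refine ⟨ξ, hξ, le_antisymm (h.inner_le_dualNorm z hξ) (csSup_le (hne.image _) ?_)⟩
  rintro _ ⟨η, hη, rfl⟩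
  exact hmax hη

lemma dualNorm_pos (h : IsMinkowskiNorm N) {z : Euc n} (hz : z ≠ 0) : 0 < dualNorm N z := by
  have := h.inner_le_dualNorm z (h.apply_inv_smul_self hz)
  rw [real_inner_smul_right, real_inner_self_eq_norm_sq] at this
  exact this.trans_lt' (by have := h.pos hz; positivity)

/-- Strict convexity of `N²` makes the maximizer unique. -/
lemma eq_of_inner_eq_dualNorm (h : IsMinkowskiNorm N) {z ξ₁ ξ₂ : Euc n} (hz : z ≠ 0)
    (h₁ : N ξ₁ = 1) (h₂ : N ξ₂ = 1) (e₁ : ⟪z, ξ₁⟫ = dualNorm N z)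
    (e₂ : ⟪z, ξ₂⟫ = dualNorm N z) : ξ₁ = ξ₂ := by
  by_contra hne
  set w := (1 / 2 : ℝ) • ξ₁ + (1 / 2 : ℝ) • ξ₂
  have hw : N w ^ 2 < 1 := by
    have := h.2.2.2.2 (Set.mem_univ ξ₁) (Set.mem_univ ξ₂) hne (by norm_num : (0 : ℝ) < 1 / 2)
      (by norm_num : (0 : ℝ) < 1 / 2) (by norm_num)
    simp only [smul_eq_mul, h₁, h₂] at this
    linarith
  have hzw : ⟪z, w⟫ = dualNorm N z := by
    rw [inner_add_right, real_inner_smul_right, real_inner_smul_right, e₁, e₂]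
    ring
  have h1w : 1 ≤ N w := by
    have := h.inner_le_dualNorm_mul z w
    rw [hzw] at this
    exact (le_mul_iff_one_le_right (h.dualNorm_pos hz)).1 this
  nlinarith

lemma exists_pos_forall_norm_sub_lt (h : IsMinkowskiNorm N) {z ξ : Euc n} (hz : z ≠ 0)
    (hξ : N ξ = 1) (hzξ : ⟪z, ξ⟫ = dualNorm N z) {ε : ℝ} (hε : 0 < ε) :
    ∃ δ > 0, ∀ η, N η = 1 → dualNorm N z - δ < ⟪z, η⟫ → ‖η - ξ‖ < ε := by
  set K := {η | N η = 1} ∩ {η | ε ≤ ‖η - ξ‖}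
  have hK : IsCompact K :=
    h.isCompact_unitSphere.inter_right (isClosed_le continuous_const (by fun_prop))
  have hgap : ∀ η ∈ K, 0 < dualNorm N z - ⟪z, η⟫ := by
    rintro η ⟨hη, hηε : ε ≤ ‖η - ξ‖⟩
    refine sub_pos.2 ((h.inner_le_dualNorm z hη).lt_of_ne fun he => ?_)
    rw [h.eq_of_inner_eq_dualNorm hz hη hξ he hzξ, sub_self, norm_zero] at hηε
    exact hηε.not_gt hε
  obtain ⟨δ, hδ, hδK⟩ := hK.exists_forall_le' (by fun_prop) hgap
  refine ⟨δ, hδ, fun η hη hηz => ?_⟩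
  by_contra hfar
  linarith [hδK η ⟨hη, not_lt.1 hfar⟩]

lemma dualNorm_sub_sub_inner_mem_Icc (h : IsMinkowskiNorm N) {z z' ξ η : Euc n}
    (hξ : N ξ = 1) (hzξ : ⟪z, ξ⟫ = dualNorm N z) (hη : N η = 1)
    (hz'η : ⟪z', η⟫ = dualNorm N z') :
    dualNorm N z' - dualNorm N z - ⟪ξ, z' - z⟫ ∈ Set.Icc 0 ⟪z' - z, η - ξ⟫ := by
  have hξ' := h.inner_le_dualNorm z' hξ
  have hη' := h.inner_le_dualNorm z hη
  simp only [inner_sub_left, inner_sub_right, real_inner_comm ξ] at hξ' hη' hzξ ⊢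
  constructor <;> linarith

lemma hasGradientAt_dualNorm (h : IsMinkowskiNorm N) {z ξ : Euc n} (hz : z ≠ 0)
    (hξ : N ξ = 1) (hzξ : ⟪z, ξ⟫ = dualNorm N z) : HasGradientAt (dualNorm N) ξ z := by
  have := nontrivial_of_ne z 0 hz
  obtain ⟨R, hR⟩ := isBounded_iff_forall_norm_le.1 h.isBounded_unitSphere
  have hR0 : 0 ≤ R := (norm_nonneg ξ).trans (hR ξ hξ)
  rw [hasGradientAt_iff_isLittleO, Asymptotics.isLittleO_iff]
  intro c hc
  obtain ⟨δ, hδ, hclose⟩ := h.exists_pos_forall_norm_sub_lt hz hξ hzξ hc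
  filter_upwards [Metric.ball_mem_nhds z (div_pos hδ (by positivity : 0 < 2 * R + 1))]
    with z' hz'
  rw [Metric.mem_ball, dist_eq_norm, lt_div_iff₀ (by positivity)] at hz'
  obtain ⟨η, hη, hz'η⟩ := h.exists_inner_eq_dualNorm z'
  obtain ⟨hlow, hupp⟩ := h.dualNorm_sub_sub_inner_mem_Icc hξ hzξ hη hz'η
  have hinner : ⟪z' - z, η - ξ⟫ ≤ ‖z' - z‖ * ‖η - ξ‖ := real_inner_le_norm _ _
  have hηξ : ‖η - ξ‖ ≤ 2 * R := by linarith [norm_sub_le η ξ, hR η hη, hR ξ hξ]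
  have hnear : dualNorm N z - δ < ⟪z, η⟫ := by
    have : ⟪z', η⟫ = ⟪z, η⟫ + ⟪z' - z, η⟫ := by rw [inner_sub_left]; ring
    simp only [inner_sub_left, inner_sub_right, real_inner_comm ξ] at hupp hinner hlow
    nlinarith [norm_nonneg (z' - z)]
  rw [Real.norm_eq_abs, abs_of_nonneg hlow]
  calc _ ≤ ‖z' - z‖ * ‖η - ξ‖ := hupp.trans hinner
    _ ≤ c * ‖z' - z‖ := by
      rw [mul_comm]; exact mul_le_mul_of_nonneg_right (hclose η hη hnear).le (norm_nonneg _)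

lemma gradient_eq_of_inner_eq_dualNorm (h : IsMinkowskiNorm N) {z ξ : Euc n} (hz : z ≠ 0)
    (hξ : N ξ = 1) (hzξ : ⟪z, ξ⟫ = dualNorm N z) :
    gradient N ξ = (dualNorm N z)⁻¹ • z := by
  have hξ0 : ξ ≠ 0 := by rintro rfl; simp [h.map_zero] at hξ
  set d := dualNorm N z
  have hmin : IsMinOn (fun η => d * N η - ⟪z, η⟫) Set.univ ξ := fun η _ => by
    change d * N ξ - ⟪z, ξ⟫ ≤ d * N η - ⟪z, η⟫
    rw [hξ, hzξ, mul_one, sub_self]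
    exact sub_nonneg.2 (h.inner_le_dualNorm_mul z η)
  have hderiv : HasFDerivAt (fun η => d * N η - ⟪z, η⟫)
      (d • fderiv ℝ N ξ - InnerProductSpace.toDual ℝ (Euc n) z) ξ :=
    ((h.differentiableAt hξ0).hasFDerivAt.const_mul d).sub
      (InnerProductSpace.toDual ℝ (Euc n) z).hasFDerivAt
  have hcrit := (hmin.isLocalMin Filter.univ_mem).hasFDerivAt_eq_zero hderiv
  have hfd : fderiv ℝ N ξ = InnerProductSpace.toDual ℝ (Euc n) (d⁻¹ • z) := by
    rw [map_smul, ← sub_eq_zero.1 hcrit, smul_smul,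
      inv_mul_cancel₀ (h.dualNorm_pos hz).ne', one_smul]
  simp [gradient, hfd]

lemma smul_gradient_smul_of_inner_eq_dualNorm (h : IsMinkowskiNorm N) {z ξ : Euc n}
    (hz : z ≠ 0) (hξ : N ξ = 1) (hzξ : ⟪z, ξ⟫ = dualNorm N z) {c : ℝ} (hc : 0 < c) :
    N (c • ξ) • gradient N (c • ξ) = (c / dualNorm N z) • z := by
  have hξ0 : ξ ≠ 0 := by rintro rfl; simp [h.map_zero] at hξ
  rw [h.apply_smul, abs_of_pos hc, hξ, mul_one, h.gradient_smul_of_pos hξ0 hc,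
    h.gradient_eq_of_inner_eq_dualNorm hz hξ hzξ, smul_smul, div_eq_mul_inv]

end IsMinkowskiNorm

open Filter Topology

lemma divZ_eq_of_eventuallyEq_smul_self {V : Euc m × Euc k → Euc m} {x : Euc m × Euc k}
    {F : Euc m → ℝ} {ξ : Euc m} {f : ℝ → ℝ} {f' : ℝ}
    (hV : (fun z => V (z, x.2)) =ᶠ[𝓝 x.1] fun z => f (F z) • z)
    (hF : HasGradientAt F ξ x.1) (hf : HasDerivAt f f' (F x.1)) :
    divZ V x = m * f (F x.1) + f' * ⟪ξ, x.1⟫ := by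
  have hfF := hf.comp_hasFDerivAt x.1 hF.hasFDerivAt
  have hcoord (i : Fin m) :
      fderiv ℝ (fun z => V (z, x.2) i) x.1 (EuclideanSpace.single i 1)
        = f (F x.1) + x.1 i * (f' * ξ i) := by
    have hVi : (fun z => V (z, x.2) i) =ᶠ[𝓝 x.1] fun z => f (F z) * z i :=
      hV.mono fun z hz => by simp [hz]
    have hprod : HasFDerivAt (fun z => f (F z) * z i)
        (f (F x.1) • EuclideanSpace.proj i + x.1 i • f' • InnerProductSpace.toDual ℝ (Euc m) ξ)
        x.1 :=
      hfF.mul (EuclideanSpace.proj i : Euc m →L[ℝ] ℝ).hasFDerivAt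
    rw [hVi.fderiv_eq, hprod.fderiv]
    simp [EuclideanSpace.inner_single_right]
  simp only [divZ, hcoord, Finset.sum_add_distrib, Finset.sum_const, Finset.card_univ,
    Fintype.card_fin, nsmul_eq_mul, PiLp.inner_apply, Finset.mul_sum]
  congr 1
  refine Finset.sum_congr rfl fun i _ => ?_
  simp only [RCLike.inner_apply, conj_trivial]
  ring

lemma gradZ_eq_smul_of_comp_dualNorm {Φ : Euc m → ℝ} (hΦ : IsMinkowskiNorm Φ)
    {u : Euc m × Euc k → ℝ} {g : ℝ → ℝ} {g' : ℝ} {z ξ : Euc m} {σ : Euc k}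
    (hu : ∀ z', u (z', σ) = g (dualNorm Φ z')) (hz : z ≠ 0) (hξ : Φ ξ = 1)
    (hzξ : ⟪z, ξ⟫ = dualNorm Φ z) (hg : HasDerivAt g g' (dualNorm Φ z)) :
    gradZ u (z, σ) = g' • ξ := by
  have hcomp := hg.comp_hasFDerivAt z (hΦ.hasGradientAt_dualNorm hz hξ hzξ).hasFDerivAt
  have hgrad : HasGradientAt (fun z' => u (z', σ)) (g' • ξ) z := by
    rwa [funext hu, hasGradientAt_iff_hasFDerivAt, map_smul]
  exact hgrad.gradient

theorem finslerLapZ_eq_of_comp_dualNorm {Φ : Euc m → ℝ} (hΦ : IsMinkowskiNorm Φ)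
    {u : Euc m × Euc k → ℝ} {x : Euc m × Euc k} (hx : x.1 ≠ 0) {g g' : ℝ → ℝ} {g'' : ℝ}
    (hu : ∀ z, u (z, x.2) = g (dualNorm Φ z)) (hg : ∀ t, 0 < t → HasDerivAt g (g' t) t)
    (hg'_pos : ∀ t, 0 < t → 0 < g' t) (hg' : HasDerivAt g' g'' (dualNorm Φ x.1)) :
    finslerLapZ Φ u x = g'' + (m - 1) * g' (dualNorm Φ x.1) / dualNorm Φ x.1 := by
  have := nontrivial_of_ne x.1 0 hx
  have hfield : (fun z => Φ (gradZ u (z, x.2)) • gradient Φ (gradZ u (z, x.2)))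
      =ᶠ[𝓝 x.1] fun z => (g' (dualNorm Φ z) / dualNorm Φ z) • z := by
    filter_upwards [isOpen_compl_singleton.mem_nhds hx] with z hz
    obtain ⟨ξ, hξ, hzξ⟩ := hΦ.exists_inner_eq_dualNorm z
    have hFz := hΦ.dualNorm_pos hz
    rw [gradZ_eq_smul_of_comp_dualNorm hΦ hu hz hξ hzξ (hg _ hFz),
      hΦ.smul_gradient_smul_of_inner_eq_dualNorm hz hξ hzξ (hg'_pos _ hFz)]
  obtain ⟨ξ, hξ, hxξ⟩ := hΦ.exists_inner_eq_dualNorm x.1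
  have hF := hΦ.dualNorm_pos hx
  rw [finslerLapZ, divZ_eq_of_eventuallyEq_smul_self hfield
    (hΦ.hasGradientAt_dualNorm hx hξ hxξ) (hg'.div (hasDerivAt_id' _) hF.ne'),
    real_inner_comm, hxξ, Pi.div_apply]
  field_simp
  ring

section Profile

variable {β C t : ℝ}

lemma hasDerivAt_rpow_add_rpow_one_div (hβ : β ≠ 0) (hC : 0 ≤ C) (ht : 0 < t) :
    HasDerivAt (fun s => (s ^ β + C) ^ (1 / β)) (t ^ (β - 1) * (t ^ β + C) ^ (1 / β - 1)) t := by
  have hA : 0 < t ^ β + C := by positivity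
  convert ((Real.hasDerivAt_rpow_const (p := β) (Or.inl ht.ne')).add_const C).rpow_const
    (p := 1 / β) (Or.inl hA.ne') using 1
  field_simp

lemma hasDerivAt_rpow_sub_one_mul_rpow_add (hβ : β ≠ 0) (hC : 0 ≤ C) (ht : 0 < t) :
    HasDerivAt (fun s => s ^ (β - 1) * (s ^ β + C) ^ (1 / β - 1))
      ((β - 1) * t ^ (β - 2) * (t ^ β + C) ^ (1 / β - 1)
        + (1 - β) * t ^ (2 * β - 2) * (t ^ β + C) ^ (1 / β - 2)) t := by
  have hA : 0 < t ^ β + C := by positivity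
  refine ((Real.hasDerivAt_rpow_const (p := β - 1) (Or.inl ht.ne')).mul
    (((Real.hasDerivAt_rpow_const (p := β) (Or.inl ht.ne')).add_const C).rpow_const
      (p := 1 / β - 1) (Or.inl hA.ne'))).congr_deriv ?_
  rw [show 2 * β - 2 = (β - 1) + (β - 1) by ring, Real.rpow_add ht,
    show (1 / β - 2) = (1 / β - 1) - 1 by ring, show β - 2 = β - 1 - 1 by ring]
  field_simp

end Profile

theorem finsler_laplacian_z_of_rho_general (m k : ℕ) (α : ℝ) (hα : 0 < α)
    (Φ : Euc m → ℝ) (Ψ : Euc k → ℝ) (hΦ : IsMinkowskiNorm Φ) :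
    ∀ x : Euc m × Euc k, x ≠ 0 → x.1 ≠ 0 →
      finslerLapZ Φ (rho α Φ Ψ) x =
        ((m : ℝ) + 2 * α) * dualNorm Φ x.1 ^ (2 * α) * rho α Φ Ψ x ^ (-(2 * α) - 1)
        - (2 * α + 1) * dualNorm Φ x.1 ^ (4 * α + 2) * rho α Φ Ψ x ^ (-(4 * α) - 3) := by
  intro x _ hx
  set β := 2 * (α + 1)
  set C := 4 * (α + 1) ^ 2 * dualNorm Ψ x.2 ^ 2
  have hβ : β ≠ 0 := by positivity
  have hC : 0 ≤ C := by positivity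
  have hF : 0 < dualNorm Φ x.1 := hΦ.dualNorm_pos hx
  have hρ (e : ℝ) : rho α Φ Ψ x ^ e = (dualNorm Φ x.1 ^ β + C) ^ (e / β) := by
    rw [rho, ← Real.rpow_mul (by positivity), one_div_mul_eq_div]
  rw [finslerLapZ_eq_of_comp_dualNorm hΦ hx (g := fun s => (s ^ β + C) ^ (1 / β))
    (fun _ => rfl) (fun _ ht => hasDerivAt_rpow_add_rpow_one_div hβ hC ht)
    (fun t ht => by positivity) (hasDerivAt_rpow_sub_one_mul_rpow_add hβ hC hF), hρ, hρ,
    show (-(2 * α) - 1) / β = 1 / β - 1 by field_simp; ring,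
    show (-(4 * α) - 3) / β = 1 / β - 2 by field_simp; ring,
    show 2 * β - 2 = 4 * α + 2 by ring, show β - 2 = 2 * α by ring,
    show β - 1 = 2 * α + 1 by ring, Real.rpow_add_one hF.ne']
  field_simp
  ring

/-- `Δ_Φ(ρ) = (m+2α) Φ⁰(z)^{2α} ρ^{-2α-1} − (2α+1) Φ⁰(z)^{4α+2} ρ^{-4α-3}` for `z ≠ 0`. -/
theorem finsler_laplacian_z_of_rho (m k : ℕ) (hm : 1 ≤ m) (hk : 1 ≤ k) (α : ℝ) (hα : 0 < α)
    (Φ : Euc m → ℝ) (Ψ : Euc k → ℝ) (hΦ : IsMinkowskiNorm Φ) (hΨ : IsMinkowskiNorm Ψ) :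
    ∀ x : Euc m × Euc k, x ≠ 0 → x.1 ≠ 0 →
      finslerLapZ Φ (rho α Φ Ψ) x =
        ((m : ℝ) + 2 * α) * dualNorm Φ x.1 ^ (2 * α) * rho α Φ Ψ x ^ (-(2 * α) - 1)
        - (2 * α + 1) * dualNorm Φ x.1 ^ (4 * α + 2) * rho α Φ Ψ x ^ (-(4 * α) - 3) :=
  finsler_laplacian_z_of_rho_general m k α hα Φ Ψ hΦ
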